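/- Let A be the unique ℝ[s]-algebra endomorphism of P with A(t_0) = t_0, A(t_1) = t_1, and A(t_i) = t_i + (−1)^i s^{i−1}/(i−1)! for every i ≥ 2 (a shift of variables by constants; in particular A is an algebra automorphism of P). Then for every integer k ≥ −1 one has the intertwining relation A ∘ L_k = V_k ∘ A as ℝ[s]-linear maps on P. (Equivalently: the change of variables t̃_i = t_i − (2i−1)!! α_{i−1} s^{i−1} for i ≥ 2 transforms the operator V_k into the operator L_k.) -/

import Mathlib

/-!
Since `A` shifts every variable by a constant, it commutes with each `∂/∂t_j`, with multiplication
by `t_0` (as `γ_0 = 0`) and with `ℝ[s]`-scalars; hence it commutes with every term of `L_k`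
except `t_j ∂/∂t_{j+k}`, which it turns into `(t_j + γ_j) ∂/∂t_{j+k}`. The extra terms
`γ_{i+1} ∂/∂t_{i+k+1}` (`i ≥ 1`) are exactly the summands `i ≥ 1` of the first sum of `V_k`,
because `γ_{i+1} = -(2i+1)!! α_i s^i`, while its summand `i = 0` is the first term of `L_k`,
as `α_0 = 1`.
-/

open MvPolynomial

noncomputable section

/-- The polynomial ring `P = ℝ[s][t₀, t₁, t₂, …]`; the variable `s` is `Polynomial.X`
in the coefficient ring. -/
abbrev P : Type := MvPolynomial ℕ (Polynomial ℝ)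

/-- The odd double factorial `(2n+1)!! = (2n+1)!/(2^n n!)` as a real number. -/
def doubleFactorialOdd (n : ℕ) : ℝ :=
  (Nat.factorial (2 * n + 1) : ℝ) / ((2 : ℝ) ^ n * Nat.factorial n)

/-- `(2j−1)!!` with the convention `(−1)!! = 1`. -/
def doubleFactorialOddPred (j : ℕ) : ℝ :=
  if j = 0 then 1 else doubleFactorialOdd (j - 1)

/-- `α_i = (−2)^i/(2i+1)!`. -/
def alphaCoeff (i : ℕ) : ℝ := (-2 : ℝ) ^ i / Nat.factorial (2 * i + 1)

/-- The Virasoro operator `V_k`, defined for all `k : ℤ` (intended for `k ≥ −1`). -/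
def Vop (k : ℤ) : P → P := fun p =>
  (∑ᶠ i : ℕ,
      (Polynomial.C (-(1 / 2 : ℝ) * doubleFactorialOdd ((i + k + 1 : ℤ)).toNat *
            alphaCoeff i) * Polynomial.X ^ i) •
        pderiv ((i + k + 1 : ℤ)).toNat p)
  + (∑ᶠ j : ℕ,
      if 0 ≤ (j : ℤ) + k then
        Polynomial.C ((1 / 2 : ℝ) * doubleFactorialOdd ((j + k : ℤ)).toNat /
            doubleFactorialOddPred j) •
          (X j * pderiv ((j + k : ℤ)).toNat p)
      else 0)
  + (if 1 ≤ k then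
      ∑ d ∈ Finset.HasAntidiagonal.antidiagonal (k - 1).toNat,
        Polynomial.C ((1 / 4 : ℝ) * doubleFactorialOdd d.1 * doubleFactorialOdd d.2) •
          pderiv d.1 (pderiv d.2 p)
     else 0)
  + (if k = -1 then Polynomial.C ((1 / 4 : ℝ)) • (X 0 * X 0 * p) else 0)
  + (if k = 0 then Polynomial.C ((1 / 16 : ℝ)) • p else 0)

/-- The Witten–Kontsevich Virasoro operator `L_k`, defined for all `k : ℤ`
(intended for `k ≥ −1`). -/
def Lop (k : ℤ) : P → P := fun p =>
  (Polynomial.C (-(1 / 2 : ℝ) * doubleFactorialOdd ((k + 1 : ℤ)).toNat) •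
      pderiv ((k + 1 : ℤ)).toNat p)
  + (∑ᶠ j : ℕ,
      if 0 ≤ (j : ℤ) + k then
        Polynomial.C ((1 / 2 : ℝ) * doubleFactorialOdd ((j + k : ℤ)).toNat /
            doubleFactorialOddPred j) •
          (X j * pderiv ((j + k : ℤ)).toNat p)
      else 0)
  + (if 1 ≤ k then
      ∑ d ∈ Finset.HasAntidiagonal.antidiagonal (k - 1).toNat,
        Polynomial.C ((1 / 4 : ℝ) * doubleFactorialOdd d.1 * doubleFactorialOdd d.2) •
          pderiv d.1 (pderiv d.2 p)
     else 0)
  + (if k = -1 then Polynomial.C ((1 / 4 : ℝ)) • (X 0 * X 0 * p) else 0)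
  + (if k = 0 then Polynomial.C ((1 / 16 : ℝ)) • p else 0)

/-- The constant (in the `t`-variables) shift `γ_i ∈ ℝ[s]`: `γ_0 = γ_1 = 0` and
`γ_i = (−1)^i s^{i−1}/(i−1)!` for `i ≥ 2`. -/
def shiftPoly (i : ℕ) : Polynomial ℝ :=
  if i ≤ 1 then 0
  else Polynomial.C ((-1 : ℝ) ^ i / Nat.factorial (i - 1)) * Polynomial.X ^ (i - 1)

/-- The unique `ℝ[s]`-algebra endomorphism of `P` with `A(t_i) = t_i + γ_i`
(an algebra automorphism, being a shift of variables by constants). -/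
def Aend : P →ₐ[Polynomial ℝ] P :=
  aeval fun i => X i + MvPolynomial.C (shiftPoly i)

section FinsumNat

variable {M : Type*} [AddCommMonoid M]

theorem hasFiniteSupport_of_forall_ge {f : ℕ → M} (N : ℕ) (h : ∀ n, N ≤ n → f n = 0) :
    f.HasFiniteSupport :=
  (Set.finite_Iio N).subset fun n hn => not_le.mp fun hNn => hn (h n hNn)

theorem finsum_eq_zero_add {f : ℕ → M} (hf : f.HasFiniteSupport) :
    ∑ᶠ n, f n = f 0 + ∑ᶠ n, f (n + 1) := by
  have huniv : insert 0 (Set.range Nat.succ) = Set.univ := by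
    ext n; cases n <;> simp
  rw [← finsum_mem_univ, ← huniv, finsum_mem_insert' _ (by simp) (hf.subset Set.inter_subset_right),
    finsum_mem_range Nat.succ_injective]

end FinsumNat

namespace MvPolynomial

variable {R σ : Type*} [CommSemiring R]

theorem pderiv_aeval_X_add_C (c : σ → R) (i : σ) (p : MvPolynomial σ R) :
    pderiv i (aeval (fun j => X j + C (c j)) p) = aeval (fun j => X j + C (c j)) (pderiv i p) := by
  classical
  induction p using MvPolynomial.induction_on with
  | C a => simp
  | add p q hp hq => simp only [map_add, hp, hq]
  | mul_X p j h =>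
    simp only [map_mul, aeval_X, Derivation.leibniz, map_add, pderiv_X, pderiv_C, h, smul_eq_mul]
    rcases eq_or_ne j i with rfl | hji <;> simp [*]

theorem exists_pderiv_eq_zero_of_le (p : MvPolynomial ℕ R) :
    ∃ N, ∀ n, N ≤ n → pderiv n p = 0 :=
  ⟨p.vars.sup id + 1, fun _ hn => pderiv_eq_zero_of_notMem_vars fun hmem => by
    have := Finset.le_sup (f := id) hmem
    simp only [id] at this
    omega⟩

end MvPolynomial

theorem pderiv_Aend (n : ℕ) (p : P) : pderiv n (Aend p) = Aend (pderiv n p) :=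
  pderiv_aeval_X_add_C shiftPoly n p

theorem Aend_X (i : ℕ) : Aend (X i) = X i + C (shiftPoly i) :=
  aeval_X _ _

theorem shiftPoly_zero : shiftPoly 0 = 0 := by
  simp [shiftPoly]

theorem shiftPoly_one : shiftPoly 1 = 0 := by
  simp [shiftPoly]

theorem doubleFactorialOdd_ne_zero (n : ℕ) : doubleFactorialOdd n ≠ 0 := by
  unfold doubleFactorialOdd
  positivity

theorem doubleFactorialOdd_mul_alphaCoeff (i : ℕ) :
    doubleFactorialOdd i * alphaCoeff i = (-1) ^ i / i.factorial := by
  have h2i : (2 * i + 1).factorial ≠ 0 := Nat.factorial_ne_zero _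
  have hi : i.factorial ≠ 0 := Nat.factorial_ne_zero _
  rw [doubleFactorialOdd, alphaCoeff, neg_pow]
  field_simp

theorem shiftPoly_add_two (i : ℕ) :
    shiftPoly (i + 2) = Polynomial.C (-(doubleFactorialOdd (i + 1) * alphaCoeff (i + 1))) *
      Polynomial.X ^ (i + 1) := by
  rw [doubleFactorialOdd_mul_alphaCoeff, shiftPoly, if_neg (by omega), pow_succ (-1 : ℝ) (i + 1)]
  simp [neg_div]

def translationSummand (k : ℤ) (p : P) (i : ℕ) : P :=
  (Polynomial.C (-(1 / 2 : ℝ) * doubleFactorialOdd ((i + k + 1 : ℤ)).toNat *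
      alphaCoeff i) * Polynomial.X ^ i) • pderiv ((i + k + 1 : ℤ)).toNat p

def linearSummand (k : ℤ) (p : P) (j : ℕ) : P :=
  if 0 ≤ (j : ℤ) + k then
    Polynomial.C ((1 / 2 : ℝ) * doubleFactorialOdd ((j + k : ℤ)).toNat /
        doubleFactorialOddPred j) •
      (X j * pderiv ((j + k : ℤ)).toNat p)
  else 0

def shiftCorrection (k : ℤ) (p : P) (j : ℕ) : P :=
  if 0 ≤ (j : ℤ) + k then
    Polynomial.C ((1 / 2 : ℝ) * doubleFactorialOdd ((j + k : ℤ)).toNat /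
        doubleFactorialOddPred j) •
      (C (shiftPoly j) * pderiv ((j + k : ℤ)).toNat p)
  else 0

def commutingPart (k : ℤ) (p : P) : P :=
  (if 1 ≤ k then
      ∑ d ∈ Finset.HasAntidiagonal.antidiagonal (k - 1).toNat,
        Polynomial.C ((1 / 4 : ℝ) * doubleFactorialOdd d.1 * doubleFactorialOdd d.2) •
          pderiv d.1 (pderiv d.2 p)
     else 0)
  + (if k = -1 then Polynomial.C ((1 / 4 : ℝ)) • (X 0 * X 0 * p) else 0)
  + (if k = 0 then Polynomial.C ((1 / 16 : ℝ)) • p else 0)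

theorem Lop_eq (k : ℤ) (p : P) :
    Lop k p = translationSummand k p 0 + ∑ᶠ j, linearSummand k p j + commutingPart k p := by
  simp only [Lop, translationSummand, linearSummand, commutingPart, alphaCoeff, add_assoc]
  norm_num

theorem Vop_eq (k : ℤ) (p : P) :
    Vop k p = ∑ᶠ i, translationSummand k p i + ∑ᶠ j, linearSummand k p j + commutingPart k p := by
  simp only [Vop, translationSummand, linearSummand, commutingPart, add_assoc]

theorem hasFiniteSupport_translationSummand (k : ℤ) (p : P) :
    (translationSummand k p).HasFiniteSupport := by
  obtain ⟨N, hN⟩ := exists_pderiv_eq_zero_of_le p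
  refine hasFiniteSupport_of_forall_ge (N + k.natAbs) fun i hi => ?_
  rw [translationSummand, hN _ (by omega), smul_zero]

theorem hasFiniteSupport_linearSummand (k : ℤ) (p : P) :
    (linearSummand k p).HasFiniteSupport := by
  obtain ⟨N, hN⟩ := exists_pderiv_eq_zero_of_le p
  refine hasFiniteSupport_of_forall_ge (N + k.natAbs) fun j hj => ?_
  rw [linearSummand, hN _ (by omega), mul_zero, smul_zero, ite_self]

theorem hasFiniteSupport_shiftCorrection (k : ℤ) (p : P) :
    (shiftCorrection k p).HasFiniteSupport := by
  obtain ⟨N, hN⟩ := exists_pderiv_eq_zero_of_le p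
  refine hasFiniteSupport_of_forall_ge (N + k.natAbs) fun j hj => ?_
  rw [shiftCorrection, hN _ (by omega), mul_zero, smul_zero, ite_self]

theorem Aend_translationSummand (k : ℤ) (p : P) (i : ℕ) :
    Aend (translationSummand k p i) = translationSummand k (Aend p) i := by
  rw [translationSummand, translationSummand, map_smul, pderiv_Aend]

theorem Aend_linearSummand (k : ℤ) (p : P) (j : ℕ) :
    Aend (linearSummand k p j) = linearSummand k (Aend p) j + shiftCorrection k (Aend p) j := by
  unfold linearSummand shiftCorrection
  split_ifs
  · rw [map_smul, map_mul, Aend_X, pderiv_Aend, add_mul, smul_add]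
  · rw [map_zero, add_zero]

theorem Aend_finsum_linearSummand (k : ℤ) (p : P) :
    Aend (∑ᶠ j, linearSummand k p j) =
      ∑ᶠ j, linearSummand k (Aend p) j + ∑ᶠ j, shiftCorrection k (Aend p) j := by
  rw [map_finsum Aend (hasFiniteSupport_linearSummand k p),
    finsum_congr (Aend_linearSummand k p),
    finsum_add_distrib (hasFiniteSupport_linearSummand k _) (hasFiniteSupport_shiftCorrection k _)]

theorem Aend_commutingPart (k : ℤ) (p : P) :
    Aend (commutingPart k p) = commutingPart k (Aend p) := by
  unfold commutingPart
  split_ifs <;>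
    simp only [map_add, map_sum, map_smul, map_mul, map_zero, Aend_X, shiftPoly_zero, pderiv_Aend,
      add_zero]

theorem shiftCorrection_add_two {k : ℤ} (hk : -2 ≤ k) (p : P) (i : ℕ) :
    shiftCorrection k p (i + 2) = translationSummand k p (i + 1) := by
  have hidx : ((i + 2 : ℕ) + k : ℤ).toNat = ((i + 1 : ℕ) + k + 1 : ℤ).toNat := by omega
  have hpred : doubleFactorialOddPred (i + 2) = doubleFactorialOdd (i + 1) := rfl
  rw [shiftCorrection, if_pos (by omega), translationSummand, hidx, hpred, shiftPoly_add_two,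
    smul_eq_C_mul, smul_eq_C_mul, ← mul_assoc, ← map_mul, ← mul_assoc, ← Polynomial.C_mul]
  congr 4
  field_simp [doubleFactorialOdd_ne_zero (i + 1)]

theorem finsum_translationSummand {k : ℤ} (hk : -2 ≤ k) (p : P) :
    ∑ᶠ i, translationSummand k p i = translationSummand k p 0 + ∑ᶠ j, shiftCorrection k p j := by
  have hshift := hasFiniteSupport_shiftCorrection k p
  have h0 : shiftCorrection k p 0 = 0 := by simp [shiftCorrection, shiftPoly_zero]
  have h1 : shiftCorrection k p 1 = 0 := by simp [shiftCorrection, shiftPoly_one]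
  rw [finsum_eq_zero_add (hasFiniteSupport_translationSummand k p), finsum_eq_zero_add hshift,
    finsum_eq_zero_add (hshift.fun_comp_of_injective Nat.succ_injective), h0, h1, zero_add,
    zero_add]
  exact congrArg _ (finsum_congr fun i => (shiftCorrection_add_two hk p i).symm)

/-- The intertwining relation `A ∘ L_k = V_k ∘ A` for all `k ≥ −1`: the change of
variables `t̃_i = t_i − (2i−1)!! α_{i−1} s^{i−1}` transforms `V_k` into `L_k`. -/
theorem Aend_intertwines (k : ℤ) (hk : -1 ≤ k) :
    ∀ p : P, Aend (Lop k p) = Vop k (Aend p) := by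
  intro p
  rw [Lop_eq, map_add, map_add, Aend_translationSummand, Aend_finsum_linearSummand,
    Aend_commutingPart, Vop_eq, finsum_translationSummand (by omega)]
  abel

end
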